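/- arXiv:0905.0417 — 3 statements merged into one kernel-verified Lean document; each statement's English description precedes it below -/
import Mathlib

section
/- Let q ≥ 2, n ≥ 1, t ≥ 1, and let C : [M] → Q^n be a code whose minimum distance satisfies min_{u ≠ v} dist(C(u), C(v)) > n(1 − 1/t²). Then C is t-TA under minimum-distance decoding: for every nonempty coalition U ⊆ [M] with |U| ≤ t and every y ∈ E(C(U)) (the envelope of the fingerprints of the users in U), every user u' ∈ [M] that minimizes dist(C(u'), y) over all users belongs to U. -/
/-! Let `u'` be a closest user to `y`, measured by the number `a(v)` of coordinates where `C v`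
agrees with `y`. Every coordinate of `y` is copied from some member of `U`, so
`n ≤ ∑_{v ∈ U} a(v) ≤ |U| · a(u') ≤ t · a(u')`. If `u' ∉ U`, the distance bound says that `C u'`
agrees with each member of `U` in fewer than `n / t²` coordinates, and each coordinate where `C u'`
agrees with `y` is one where it agrees with some member, so `t² · a(u') < |U| · n ≤ t · n`. The two
estimates contradict each other. -/

open Finset

variable {ι α κ : Type*} [Fintype ι] [DecidableEq α]

def agreement (x y : ι → α) : ℕ := #{i | x i = y i}

lemma agreement_comm (x y : ι → α) : agreement x y = agreement y x := by
  simp only [agreement, eq_comm]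

lemma agreement_self (x : ι → α) : agreement x x = Fintype.card ι := by
  simp [agreement]

lemma agreement_add_hammingDist (x y : ι → α) :
    agreement x y + hammingDist x y = Fintype.card ι :=
  card_filter_add_card_filter_not _

lemma mul_agreement_lt_of_lt_mul_hammingDist {x y : ι → α} {s : ℕ}
    (h : Fintype.card ι * (s - 1) < s * hammingDist x y) :
    s * agreement x y < Fintype.card ι := by
  have hsum := agreement_add_hammingDist x y
  obtain _ | s := s
  · simp at h
  · rw [Nat.add_sub_cancel] at h
    nlinarith

def envelope (c : κ → ι → α) (U : Finset κ) : Set (ι → α) :=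
  {y | ∀ i, ∃ u ∈ U, y i = c u i}

lemma agreement_le_sum_of_mem_envelope {c : κ → ι → α} {U : Finset κ} {y : ι → α}
    (hy : y ∈ envelope c U) (x : ι → α) :
    agreement x y ≤ ∑ u ∈ U, agreement x (c u) := by
  classical
  refine (card_le_card fun i hi => ?_).trans card_biUnion_le
  obtain ⟨u, hu, hyu⟩ := hy i
  rw [mem_filter] at hi
  exact mem_biUnion.2 ⟨u, hu, mem_filter.2 ⟨mem_univ i, hi.2.trans hyu⟩⟩

theorem stmt2_general (q n t M : ℕ)
    (C : Fin M → Fin n → Fin q)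
    (hdist : ∀ u v : Fin M, u ≠ v →
      n * (t ^ 2 - 1) < t ^ 2 * hammingDist (C u) (C v))
    (U : Finset (Fin M)) (hUne : U.Nonempty) (hUcard : U.card ≤ t)
    (y : Fin n → Fin q) (henv : ∀ l, ∃ u ∈ U, y l = C u l)
    (u' : Fin M)
    (hmin : ∀ v : Fin M, hammingDist (C u') y ≤ hammingDist (C v) y) :
    u' ∈ U := by
  by_contra hu'
  have hy : y ∈ envelope C U := henv
  have hclosest : ∀ v, agreement (C v) y ≤ agreement (C u') y := fun v => by
    have := hmin v
    have := agreement_add_hammingDist (C v) y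
    have := agreement_add_hammingDist (C u') y
    omega
  have hcover : n ≤ #U * agreement (C u') y := by
    calc n = agreement y y := by rw [agreement_self, Fintype.card_fin]
      _ ≤ ∑ v ∈ U, agreement (C v) y := by
          simpa only [agreement_comm y] using agreement_le_sum_of_mem_envelope hy y
      _ ≤ #U * agreement (C u') y := by
          simpa using sum_le_card_nsmul U _ _ fun v _ => hclosest v
  have hfar : t ^ 2 * agreement (C u') y < #U * n := by
    calc t ^ 2 * agreement (C u') y ≤ ∑ v ∈ U, t ^ 2 * agreement (C u') (C v) := by
          rw [← mul_sum]; exact Nat.mul_le_mul_left _ (agreement_le_sum_of_mem_envelope hy _)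
      _ < ∑ _v ∈ U, n := sum_lt_sum_of_nonempty hUne fun v hv => by
          have hdist_uv := hdist u' v (ne_of_mem_of_not_mem hv hu').symm
          simpa using mul_agreement_lt_of_lt_mul_hammingDist (x := C u') (y := C v)
            (by simpa using hdist_uv)
      _ = #U * n := by rw [sum_const, smul_eq_mul]
  refine lt_irrefl (t ^ 2 * agreement (C u') y) ?_
  calc t ^ 2 * agreement (C u') y < #U * n := hfar
    _ ≤ t * n := Nat.mul_le_mul_right n hUcard
    _ ≤ t * (t * agreement (C u') y) :=
        Nat.mul_le_mul_left t (hcover.trans (Nat.mul_le_mul_right _ hUcard))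
    _ = t ^ 2 * agreement (C u') y := by ring

/-- A one-level code with minimum distance `> n(1 − 1/t²)`
(expressed over ℕ as `n·(t² − 1) < t²·dist`) is `t`-TA under minimum-distance
decoding: every user minimizing the distance to a forgery created by a coalition
of size at most `t` belongs to the coalition. -/
theorem stmt2 (q n t M : ℕ) (hq : 2 ≤ q) (hn : 1 ≤ n) (ht : 1 ≤ t)
    (C : Fin M → Fin n → Fin q)
    (hdist : ∀ u v : Fin M, u ≠ v →
      n * (t ^ 2 - 1) < t ^ 2 * hammingDist (C u) (C v))
    (U : Finset (Fin M)) (hUne : U.Nonempty) (hUcard : U.card ≤ t)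
    (y : Fin n → Fin q) (henv : ∀ l, ∃ u ∈ U, y l = C u l)
    (u' : Fin M)
    (hmin : ∀ v : Fin M, hammingDist (C u') y ≤ hammingDist (C v) y) :
    u' ∈ U :=
  stmt2_general q n t M C hdist U hUne hUcard y henv u' hmin
end

section
/- Let q ≥ 2, n ≥ 1 and t_1 > t_2 ≥ 1. Let C : [M_1] × [M_2] → Q^n be a two-level code with d_1(C) > n(1 − 1/t_1²) and d_2(C) > n(1 − 1/t_2²). Then C is (t_1,t_2)-TA under minimum-distance decoding, i.e.: (a) for every nonempty coalition U ⊆ [M_1] × [M_2] with |U| ≤ t_2 and every y ∈ E(C(U)), every user u' minimizing dist(C(u'), y) over all users belongs to U; and (b) for every nonempty coalition U with |U| ≤ t_1 and every y ∈ E(C(U)), every user u' minimizing dist(C(u'), y) over all users has its group index G(u') in G(U) = {u_1 : (u_1,u_2) ∈ U}. -/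
/-!
Let `U` be a coalition of `k` users and `y` a word in its envelope. Every position of `y` is
copied from some member, so by pigeonhole some member agrees with `y` on at least `n / k`
positions; a minimum-distance decoded user `u'` is at least as close to `y`, hence also agrees
with `y` on at least `n / k` positions. Those positions are again covered by `U`, so some member
agrees with `u'` on at least `n / k²` positions, i.e. lies within distance `n (1 - 1 / k²)` of `u'`.
The distance hypotheses then force `u'` into `U` (for `k ≤ t₂`), respectively into a group of
`U` (for `k ≤ t₁`).
-/

open Finset

lemma card_filter_eq_add_hammingDist {ι β : Type*} [Fintype ι] [DecidableEq β] (x y : ι → β) :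
    #{i | x i = y i} + hammingDist x y = Fintype.card ι :=
  card_filter_add_card_filter_not _

lemma exists_mem_card_le_mul_card_of_subset_biUnion {α γ : Type*} [DecidableEq γ]
    {U : Finset α} (hU : U.Nonempty) {S : α → Finset γ} {T : Finset γ}
    (hT : T ⊆ U.biUnion S) : ∃ v ∈ U, #T ≤ #U * #(S v) := by
  refine exists_le_of_sum_le hU ?_
  calc ∑ _v ∈ U, #T = #U * #T := by rw [sum_const, smul_eq_mul]
    _ ≤ #U * ∑ v ∈ U, #(S v) := Nat.mul_le_mul_left _ ((card_le_card hT).trans card_biUnion_le)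
    _ = ∑ v ∈ U, #U * #(S v) := mul_sum _ _ _

lemma not_lt_mul_hammingDist_of_le_mul_card_filter_eq {ι β : Type*} [Fintype ι]
    [DecidableEq β] {x y : ι → β} {s : ℕ} (h : Fintype.card ι ≤ s * #{i | x i = y i}) :
    ¬ Fintype.card ι * (s - 1) < s * hammingDist x y := by
  have hsum := card_filter_eq_add_hammingDist x y
  rcases Nat.eq_zero_or_pos s with rfl | hs
  · simp
  obtain ⟨r, rfl⟩ := Nat.exists_eq_add_of_le' hs
  simp only [Nat.add_sub_cancel]
  nlinarith

section Envelope

variable {α ι β : Type*} [Fintype ι] [DecidableEq β] {C : α → ι → β} {U : Finset α}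
  {y : ι → β}

lemma exists_mem_le_mul_card_filter_eq_of_forall_exists_mem [DecidableEq ι]
    (hU : U.Nonempty) (x : ι → β) (hy : ∀ i, ∃ u ∈ U, y i = C u i) :
    ∃ v ∈ U, #{i | x i = y i} ≤ #U * #{i | x i = C v i} :=
  exists_mem_card_le_mul_card_of_subset_biUnion hU fun i hi => by
    obtain ⟨u, hu, hyu⟩ := hy i
    simp only [mem_filter, mem_univ, true_and] at hi
    exact mem_biUnion.2 ⟨u, hu, by simp [hi, hyu]⟩

lemma exists_mem_card_le_sq_mul_card_filter_eq (hU : U.Nonempty)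
    (hy : ∀ i, ∃ u ∈ U, y i = C u i) {u' : α}
    (hmin : ∀ v ∈ U, hammingDist (C u') y ≤ hammingDist (C v) y) :
    ∃ w ∈ U, Fintype.card ι ≤ #U ^ 2 * #{i | C u' i = C w i} := by
  classical
  obtain ⟨v, hvU, hv⟩ := exists_mem_le_mul_card_filter_eq_of_forall_exists_mem hU y hy
  obtain ⟨w, hwU, hw⟩ := exists_mem_le_mul_card_filter_eq_of_forall_exists_mem hU (C u') hy
  have hv : Fintype.card ι ≤ #U * #{i | C v i = y i} := by
    simpa only [filter_true, card_univ, eq_comm] using hv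
  have hcloser : #{i | C v i = y i} ≤ #{i | C u' i = y i} := by
    have := hmin v hvU
    have := card_filter_eq_add_hammingDist (C v) y
    have := card_filter_eq_add_hammingDist (C u') y
    omega
  refine ⟨w, hwU, ?_⟩
  calc Fintype.card ι ≤ #U * #{i | C u' i = y i} := hv.trans (Nat.mul_le_mul_left _ hcloser)
    _ ≤ #U * (#U * #{i | C u' i = C w i}) := Nat.mul_le_mul_left _ hw
    _ = #U ^ 2 * #{i | C u' i = C w i} := by ring

lemma exists_mem_forall_not_lt_mul_hammingDist (hU : U.Nonempty)
    (hy : ∀ i, ∃ u ∈ U, y i = C u i) {u' : α}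
    (hmin : ∀ v ∈ U, hammingDist (C u') y ≤ hammingDist (C v) y) :
    ∃ w ∈ U, ∀ t, #U ≤ t →
      ¬ Fintype.card ι * (t ^ 2 - 1) < t ^ 2 * hammingDist (C u') (C w) := by
  obtain ⟨w, hwU, hw⟩ := exists_mem_card_le_sq_mul_card_filter_eq hU hy hmin
  exact ⟨w, hwU, fun t ht => not_lt_mul_hammingDist_of_le_mul_card_filter_eq <|
    hw.trans (Nat.mul_le_mul_right _ (Nat.pow_le_pow_left ht 2))⟩

end Envelope

theorem stmt3_general (q n t₁ t₂ M₁ M₂ : ℕ) (ht : t₂ < t₁)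
    (C : Fin M₁ × Fin M₂ → Fin n → Fin q)
    (hd1 : ∀ u v : Fin M₁ × Fin M₂, u.1 ≠ v.1 →
      n * (t₁ ^ 2 - 1) < t₁ ^ 2 * hammingDist (C u) (C v))
    (hd2 : ∀ u v : Fin M₁ × Fin M₂, u.2 ≠ v.2 →
      n * (t₂ ^ 2 - 1) < t₂ ^ 2 * hammingDist (C u) (C v)) :
    (∀ U : Finset (Fin M₁ × Fin M₂), U.Nonempty → U.card ≤ t₂ →
      ∀ y : Fin n → Fin q, (∀ l, ∃ u ∈ U, y l = C u l) →
      ∀ u' : Fin M₁ × Fin M₂,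
        (∀ v, hammingDist (C u') y ≤ hammingDist (C v) y) → u' ∈ U) ∧
    (∀ U : Finset (Fin M₁ × Fin M₂), U.Nonempty → U.card ≤ t₁ →
      ∀ y : Fin n → Fin q, (∀ l, ∃ u ∈ U, y l = C u l) →
      ∀ u' : Fin M₁ × Fin M₂,
        (∀ v, hammingDist (C u') y ≤ hammingDist (C v) y) →
        u'.1 ∈ U.image Prod.fst) := by
  constructor
  · intro U hU hUt y hy u' hmin
    obtain ⟨w, hwU, hw⟩ := exists_mem_forall_not_lt_mul_hammingDist hU hy fun v _ => hmin v
    rw [Fintype.card_fin] at hw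
    by_contra hu'
    by_cases h₂ : u'.2 = w.2
    · exact hw t₁ (hUt.trans ht.le) (hd1 u' w fun h₁ => hu' (Prod.ext h₁ h₂ ▸ hwU))
    · exact hw t₂ hUt (hd2 u' w h₂)
  · intro U hU hUt y hy u' hmin
    obtain ⟨w, hwU, hw⟩ := exists_mem_forall_not_lt_mul_hammingDist hU hy fun v _ => hmin v
    rw [Fintype.card_fin] at hw
    by_contra hu'
    exact hw t₁ hUt (hd1 u' w fun h₁ => hu' (mem_image.2 ⟨w, hwU, h₁.symm⟩))

/-- A two-level code with `d₁(C) > n(1 − 1/t₁²)` and `d₂(C) > n(1 − 1/t₂²)`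
(the inequalities expressed over ℕ) is `(t₁,t₂)`-TA under minimum-distance decoding:
(a) for coalitions of size at most `t₂`, every distance minimizer is a coalition member;
(b) for coalitions of size at most `t₁`, every distance minimizer has its group index
among the groups of the coalition. -/
theorem stmt3 (q n t₁ t₂ M₁ M₂ : ℕ) (hq : 2 ≤ q) (hn : 1 ≤ n)
    (ht₂ : 1 ≤ t₂) (ht : t₂ < t₁)
    (C : Fin M₁ × Fin M₂ → Fin n → Fin q)
    (hd1 : ∀ u v : Fin M₁ × Fin M₂, u.1 ≠ v.1 →
      n * (t₁ ^ 2 - 1) < t₁ ^ 2 * hammingDist (C u) (C v))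
    (hd2 : ∀ u v : Fin M₁ × Fin M₂, u.2 ≠ v.2 →
      n * (t₂ ^ 2 - 1) < t₂ ^ 2 * hammingDist (C u) (C v)) :
    (∀ U : Finset (Fin M₁ × Fin M₂), U.Nonempty → U.card ≤ t₂ →
      ∀ y : Fin n → Fin q, (∀ l, ∃ u ∈ U, y l = C u l) →
      ∀ u' : Fin M₁ × Fin M₂,
        (∀ v, hammingDist (C u') y ≤ hammingDist (C v) y) → u' ∈ U) ∧
    (∀ U : Finset (Fin M₁ × Fin M₂), U.Nonempty → U.card ≤ t₁ →
      ∀ y : Fin n → Fin q, (∀ l, ∃ u ∈ U, y l = C u l) →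
      ∀ u' : Fin M₁ × Fin M₂,
        (∀ v, hammingDist (C u') y ≤ hammingDist (C v) y) →
        u'.1 ∈ U.image Prod.fst) :=
  stmt3_general q n t₁ t₂ M₁ M₂ ht C hd1 hd2
end

section
/- Let q ≥ 2, n ≥ 1, t ≥ 2, and let C : [M_1] × [M_2] → Q^n be a two-level code with d_1(C) > n(1 − 1/t²). Then for every nonempty coalition U ⊆ [M_1] × [M_2] with |U| ≤ t, every y ∈ E(C(U)), and every user u' whose group index G(u') does not belong to G(U) = {u_1 : (u_1,u_2) ∈ U}, there exists a coalition member u ∈ U with dist(C(u), y) < dist(C(u'), y); in particular no user from a group outside G(U) can minimize the distance to y. -/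
/-!
Count agreements instead of distances. Since `y` lies in the envelope of `U`, every coordinate of
`y` agrees with some member of `U`, so the agreements of the `|U| ≤ t` members with `y` add up to
at least `n` and some member agrees with `y` in at least `n / t` coordinates. An outsider `u'`
agrees with `y` only where it agrees with some member of `U`, and the distance bound says it agrees
with each of them in fewer than `n / t²` coordinates; hence it agrees with `y` in fewer than
`|U| · n / t² ≤ n / t` coordinates.
-/

open Finset

section Agreement

variable {ι β κ : Type*} [Fintype ι] [DecidableEq β]

def agreeCount (x y : ι → β) : ℕ :=
  #{i | x i = y i}

theorem agreeCount_add_hammingDist (x y : ι → β) :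
    agreeCount x y + hammingDist x y = Fintype.card ι :=
  card_filter_add_card_filter_not _

theorem agreeCount_self (x : ι → β) : agreeCount x x = Fintype.card ι := by
  simp [agreeCount]

theorem agreeCount_comm (x y : ι → β) : agreeCount x y = agreeCount y x := by
  simp only [agreeCount, eq_comm]

theorem hammingDist_lt_of_agreeCount_lt {x x' y : ι → β}
    (h : agreeCount x' y < agreeCount x y) : hammingDist x y < hammingDist x' y := by
  have := agreeCount_add_hammingDist x y
  have := agreeCount_add_hammingDist x' y
  omega

theorem mul_agreeCount_lt_of_mul_pred_lt {x y : ι → β} {s : ℕ}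
    (h : Fintype.card ι * (s - 1) < s * hammingDist x y) :
    s * agreeCount x y < Fintype.card ι := by
  rcases s with _ | r
  · simp at h
  have hsplit : (r + 1) * agreeCount x y + (r + 1) * hammingDist x y =
      Fintype.card ι * r + Fintype.card ι := by
    rw [← mul_add, agreeCount_add_hammingDist]; ring
  rw [Nat.add_sub_cancel] at h
  omega

variable {U : Finset κ} {f : κ → ι → β} {y : ι → β}

theorem agreeCount_le_sum_of_forall_exists_mem (hy : ∀ i, ∃ u ∈ U, y i = f u i) (x : ι → β) :
    agreeCount x y ≤ ∑ u ∈ U, agreeCount x (f u) := by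
  classical
  refine (card_le_card fun i hi => ?_).trans card_biUnion_le
  obtain ⟨u, hu, hyu⟩ := hy i
  simp only [mem_filter, mem_univ, true_and, mem_biUnion] at hi ⊢
  exact ⟨u, hu, hi.trans hyu⟩

theorem exists_mem_card_le_mul_agreeCount {t : ℕ} (hU : U.Nonempty) (hcard : #U ≤ t)
    (hy : ∀ i, ∃ u ∈ U, y i = f u i) :
    ∃ u ∈ U, Fintype.card ι ≤ t * agreeCount (f u) y := by
  refine exists_le_of_sum_le hU ?_
  calc ∑ _u ∈ U, Fintype.card ι = #U * Fintype.card ι := by rw [sum_const, smul_eq_mul]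
    _ ≤ t * agreeCount y y := by rw [agreeCount_self]; gcongr
    _ ≤ t * ∑ u ∈ U, agreeCount y (f u) := by
      gcongr; exact agreeCount_le_sum_of_forall_exists_mem hy y
    _ = ∑ u ∈ U, t * agreeCount (f u) y := by simp only [mul_sum, agreeCount_comm y]

theorem mul_agreeCount_lt_card_of_forall_mem {t : ℕ} {x : ι → β} (hU : U.Nonempty)
    (hcard : #U ≤ t) (hy : ∀ i, ∃ u ∈ U, y i = f u i)
    (hfar : ∀ v ∈ U, t ^ 2 * agreeCount x (f v) < Fintype.card ι) :
    t * agreeCount x y < Fintype.card ι := by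
  refine Nat.lt_of_mul_lt_mul_left (a := t) ?_
  calc t * (t * agreeCount x y) = t ^ 2 * agreeCount x y := by ring
    _ ≤ ∑ v ∈ U, t ^ 2 * agreeCount x (f v) := by
      rw [← mul_sum]; gcongr; exact agreeCount_le_sum_of_forall_exists_mem hy x
    _ < ∑ _v ∈ U, Fintype.card ι := sum_lt_sum_of_nonempty hU hfar
    _ = #U * Fintype.card ι := by rw [sum_const, smul_eq_mul]
    _ ≤ t * Fintype.card ι := by gcongr

end Agreement

theorem stmt17_general (q n t M₁ M₂ : ℕ)
    (C : Fin M₁ × Fin M₂ → Fin n → Fin q)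
    (hd1 : ∀ u v : Fin M₁ × Fin M₂, u.1 ≠ v.1 →
      n * (t ^ 2 - 1) < t ^ 2 * hammingDist (C u) (C v))
    (U : Finset (Fin M₁ × Fin M₂)) (hUne : U.Nonempty) (hUcard : U.card ≤ t)
    (y : Fin n → Fin q) (henv : ∀ l, ∃ u ∈ U, y l = C u l)
    (u' : Fin M₁ × Fin M₂) (hu' : u'.1 ∉ U.image Prod.fst) :
    (∃ u ∈ U, hammingDist (C u) y < hammingDist (C u') y) ∧
    ¬ (∀ v : Fin M₁ × Fin M₂, hammingDist (C u') y ≤ hammingDist (C v) y) := by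
  obtain ⟨u, hu, hclose⟩ := exists_mem_card_le_mul_agreeCount hUne hUcard henv
  have hfar : ∀ v ∈ U, t ^ 2 * agreeCount (C u') (C v) < Fintype.card (Fin n) := fun v hv =>
    mul_agreeCount_lt_of_mul_pred_lt <| by
      simpa using hd1 u' v fun h => hu' (mem_image.mpr ⟨v, hv, h.symm⟩)
  have hlt : hammingDist (C u) y < hammingDist (C u') y :=
    hammingDist_lt_of_agreeCount_lt <| Nat.lt_of_mul_lt_mul_left
      ((mul_agreeCount_lt_card_of_forall_mem hUne hUcard henv hfar).trans_le hclose)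
  exact ⟨⟨u, hu, hlt⟩, fun hmin => (hmin u).not_gt hlt⟩

/-- for a two-level code with `d₁(C) > n(1 − 1/t²)` (expressed over ℕ as
`n·(t² − 1) < t²·dist` for users in distinct groups), any coalition `U` of size at most `t`,
any forgery `y` in the envelope `E(C(U))`, and any user `u'` whose group is not among
the groups of `U`, some coalition member is strictly closer to `y` than `u'`;
in particular `u'` cannot minimize the distance to `y`. -/
theorem stmt17 (q n t M₁ M₂ : ℕ) (hq : 2 ≤ q) (hn : 1 ≤ n) (ht : 2 ≤ t)
    (C : Fin M₁ × Fin M₂ → Fin n → Fin q)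
    (hd1 : ∀ u v : Fin M₁ × Fin M₂, u.1 ≠ v.1 →
      n * (t ^ 2 - 1) < t ^ 2 * hammingDist (C u) (C v))
    (U : Finset (Fin M₁ × Fin M₂)) (hUne : U.Nonempty) (hUcard : U.card ≤ t)
    (y : Fin n → Fin q) (henv : ∀ l, ∃ u ∈ U, y l = C u l)
    (u' : Fin M₁ × Fin M₂) (hu' : u'.1 ∉ U.image Prod.fst) :
    (∃ u ∈ U, hammingDist (C u) y < hammingDist (C u') y) ∧
    ¬ (∀ v : Fin M₁ × Fin M₂, hammingDist (C u') y ≤ hammingDist (C v) y) :=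
  stmt17_general q n t M₁ M₂ C hd1 U hUne hUcard y henv u' hu'
end
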